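/- In the mirror model, for any configuration ξ of the internal mirrors on the wall between ring R₁ and ring R₂, provided ξ = 1 on the outer walls and ξ = 1 on the wall between R₂ and R₃, the single-particle map F_ξ is a bijection of Σ̂₁ = (R₁ ∪ R₂) × P onto itself; consequently the uniform probability distribution ρ₁ on Σ₁ = ((R₁ ∪ R₂) × P)^N, i.e. ρ₁(q,p) = Π_{i=1}^N (1/(8R)) 1_{R₁∪R₂}(q_i), is invariant under the N-particle dynamics U_ξ(·,t) for every t ≥ 1. -/

import Mathlib

/-!
Common setup for the mirror model of Lefevere–Sasa:
non-interacting particles on three vertical rings `R₁, R₂, R₃`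
(columns `0,1,2` of `Fin 3`, vertical coordinate in `Fin R`, periodic),
with velocities `±e₊, ±e₋` and random mirrors on the internal walls.
-/

namespace Mirror

/-- The four velocities: `pe = e₊`, `me = -e₊`, `pm = e₋`, `mm = -e₋`. -/
inductive Vel : Type
  | pe | me | pm | mm
  deriving DecidableEq

instance : Fintype Vel where
  elems := {.pe, .me, .pm, .mm}
  complete := by intro x; cases x <;> simp

/-- Whether the velocity has a positive horizontal component. -/
def Vel.right : Vel → Bool
  | .pe => true
  | .pm => true
  | _ => false

/-- Positions: column in `{1,2,3}` (encoded `Fin 3`) and vertical coordinate mod `R`. -/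
abbrev Pos (R : ℕ) := Fin 3 × Fin R

/-- Single-particle states: position and velocity. -/
abbrev State (R : ℕ) := Pos R × Vel

/-- A mirror configuration: walls are indexed by `Fin 4`
(`0` = left outer wall, `1` = wall between `R₁,R₂`, `2` = wall between `R₂,R₃`,
`3` = right outer wall) and by the vertical coordinate of the shifted site. -/
abbrev Config (R : ℕ) := Fin 4 → Fin R → Bool

/-- Configurations of the internal walls `S` (walls `1` and `2`). -/
abbrev IConfig (R : ℕ) := Fin 2 → Fin R → Bool

/-- Vertical successor (mod `R`). -/
def fsucc {R : ℕ} (k : Fin R) : Fin R :=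
  ⟨(k.1 + 1) % R, Nat.mod_lt _ (Nat.lt_of_le_of_lt (Nat.zero_le _) k.isLt)⟩

/-- Vertical predecessor (mod `R`). -/
def fpred {R : ℕ} (k : Fin R) : Fin R :=
  ⟨(k.1 + (R - 1)) % R, Nat.mod_lt _ (Nat.lt_of_le_of_lt (Nat.zero_le _) k.isLt)⟩

/-- Vertical coordinate of the shifted mirror site `q + p` encountered by a
particle at vertical coordinate `k` with velocity `p`. -/
def site {R : ℕ} (k : Fin R) : Vel → Fin R
  | .pe => k
  | .mm => k
  | .pm => fpred k
  | .me => fpred k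

/-- Index of the wall on which the mirror site `q + p` lies. -/
def wall (i : Fin 3) (p : Vel) : Fin 4 :=
  if p.right then ⟨i.1 + 1, by have := i.isLt; omega⟩
  else ⟨i.1, by have := i.isLt; omega⟩

/-- One step of the single-particle mirror dynamics
`F_ξ(q,p) = (q + p + π_{ξ(q+p)}(p), π_{ξ(q+p)}(p))`. -/
def step {R : ℕ} (ξ : Config R) : State R → State R :=
  fun x =>
    match x with
    | ((i, k), p) =>
      if ξ (wall i p) (site k p) then
        -- a mirror is present: the velocity is reflected, `p ↦ p̄`
        match p with
        | .pe => ((i, fsucc k), .mm)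
        | .me => ((i, fpred k), .pm)
        | .pm => ((i, fpred k), .me)
        | .mm => ((i, fsucc k), .pe)
      else
        -- no mirror: the particle moves by `2p`
        match p with
        | .pe => ((i + 1, fsucc k), .pe)
        | .me => ((i - 1, fpred k), .me)
        | .pm => ((i + 1, fpred k), .pm)
        | .mm => ((i - 1, fsucc k), .mm)

/-- The iterated dynamics `F_ξ(·,t)`. -/
def iter {R : ℕ} (ξ : Config R) (t : ℕ) : State R → State R := (step ξ)^[t]

/-- The configuration before the switching time: random mirrors `σ` on the wall
between `R₁` and `R₂`, full mirrors (closed wall) between `R₂` and `R₃`,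
full mirrors on the outer walls. -/
def xi1 {R : ℕ} (σ : IConfig R) : Config R :=
  fun j k => if j.1 = 1 then σ 0 k else true

/-- The configuration after the switching time: random mirrors `σ` on both
internal walls, full mirrors on the outer walls. -/
def xi2 {R : ℕ} (σ : IConfig R) : Config R :=
  fun j k => if j.1 = 1 then σ 0 k else if j.1 = 2 then σ 1 k else true

/-- The concatenated single-particle dynamics `F̃(·,t)`: `F¹` up to time `τ`,
then `F²`. -/
def Ftilde {R : ℕ} (σ : IConfig R) (τ t : ℕ) : State R → State R :=
  if t ≤ τ then iter (xi1 σ) t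
  else (iter (xi2 σ) (t - τ)) ∘ (iter (xi1 σ) τ)

/-- The ring (column) on which a state sits. -/
def ring {R : ℕ} (x : State R) : Fin 3 := x.1.1

/-- Bernoulli(γ) product weight of an internal mirror configuration:
the density of the i.i.d. law `Q` of the mirrors. -/
noncomputable def wt (R : ℕ) (γ : ℝ) (σ : IConfig R) : ℝ :=
  ∏ s : Fin 2 × Fin R, (if σ s.1 s.2 then γ else 1 - γ)

open Classical in
/-- `Q`-probability of an event on mirror configurations. -/
noncomputable def Qprob (R : ℕ) (γ : ℝ) (E : IConfig R → Prop) : ℝ :=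
  ∑ σ : IConfig R, if E σ then wt R γ σ else 0

/-- `Q`-expectation of a function of the mirror configuration. -/
noncomputable def Qexp (R : ℕ) (γ : ℝ) (f : IConfig R → ℝ) : ℝ :=
  ∑ σ : IConfig R, wt R γ σ * f σ

/-- `Q`-variance. -/
noncomputable def Qvar (R : ℕ) (γ : ℝ) (f : IConfig R → ℝ) : ℝ :=
  Qexp R γ (fun σ => (f σ - Qexp R γ f) ^ 2)

/-- `b₁(t)` for a given mirror configuration `σ`: the probability that a single
particle, started uniformly on ring `R₁`, is on ring `R₁` at time `t` under `F¹`. -/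
noncomputable def b1 (R : ℕ) (σ : IConfig R) (t : ℕ) : ℝ :=
  (1 / (4 * (R : ℝ))) *
    ∑ x : State R, (if ring x = 0 ∧ ring (iter (xi1 σ) t x) = 0 then 1 else 0)

/-- Single-particle density of the initial Gibbs measure `ρ₀`
(uniform on `R₁ × P`). -/
noncomputable def rho0 (R : ℕ) : State R → ℝ :=
  fun x => if ring x = 0 then 1 / (4 * (R : ℝ)) else 0

/-- Single-particle density of the Gibbs measure `ρ₁`
(uniform on `(R₁ ∪ R₂) × P`). -/
noncomputable def rho1 (R : ℕ) : State R → ℝ :=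
  fun x => if ring x ≠ 2 then 1 / (8 * (R : ℝ)) else 0

/-- Single-particle density of the Gibbs measure `ρ^m` with ring densities `m`:
`ρ̂^m(q,p) = (1/(4R)) Σᵢ mⁱ 1_{Rᵢ}(q)`. -/
noncomputable def rhoM (R : ℕ) (m : Fin 3 → ℝ) : State R → ℝ :=
  fun x => (1 / (4 * (R : ℝ))) * m (ring x)

/-- The macroscopic observable `φ_N^i` (density of particles on ring `i`),
for an `N = R` particle configuration. -/
noncomputable def phi (R : ℕ) (i : Fin 3) (x : Fin R → State R) : ℝ :=
  (1 / (R : ℝ)) * ∑ j, (if ring (x j) = i then 1 else 0)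

/-- The cumulant generating function
`ψ_N(μ, η₁, η₂, U_t) = (1/N) log ⟨exp(N(η₁ φ_N¹ + η₂ φ_N²))(U_t(x))⟩_μ`,
where `μ` is the product of the single-particle density `μ̂` and the evolution
is the product of the single-particle map `F` (here `N = R`). -/
noncomputable def psi (R : ℕ) (μ : State R → ℝ) (η₁ η₂ : ℝ)
    (F : State R → State R) : ℝ :=
  (1 / (R : ℝ)) * Real.log (∑ x : Fin R → State R,
    (∏ j, μ (x j)) *
      Real.exp ((R : ℝ) * (η₁ * phi R 0 (fun j => F (x j)) +
        η₂ * phi R 1 (fun j => F (x j)))))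

/-- First component of `m_N = ∇_η ψ_N`. -/
noncomputable def mN1 (R : ℕ) (μ : State R → ℝ) (η₁ η₂ : ℝ)
    (F : State R → State R) : ℝ :=
  deriv (fun a => psi R μ a η₂ F) η₁

/-- Second component of `m_N = ∇_η ψ_N`. -/
noncomputable def mN2 (R : ℕ) (μ : State R → ℝ) (η₁ η₂ : ℝ)
    (F : State R → State R) : ℝ :=
  deriv (fun b => psi R μ η₁ b F) η₂

/-- Expected density on ring `i` at the (single-particle) evolution `F`,
starting from the single-particle Gibbs measure with ring densities `m`:
`b_i = ⟨1_{R_i}(F(·))⟩_{ρ̂^m}`. -/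
noncomputable def bm (R : ℕ) (m : Fin 3 → ℝ) (F : State R → State R)
    (i : Fin 3) : ℝ :=
  ∑ x : State R, rhoM R m x * (if ring (F x) = i then 1 else 0)

/-- Vertical translation by one site. -/
def vshift {R : ℕ} (x : State R) : State R := ((x.1.1, fsucc x.1.2), x.2)

/-- The averaged one-step transition kernel `K(x;x') = Q[F¹(x') = x]`. -/
noncomputable def kern (R : ℕ) (γ : ℝ) (x x' : State R) : ℝ :=
  ∑ σ : IConfig R, wt R γ σ * (if step (xi1 σ) x' = x then 1 else 0)

end Mirror

namespace Mirror

/-!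
A mirror step is reversible: after flipping the velocity, the particle meets the same mirror
site and retraces its step, so `F_ξ ∘ θ ∘ F_ξ = θ` for the velocity flip `θ`. The closed walls
`0` and `2` keep particles in `R₁ ∪ R₂`, so `F_ξ` restricts to an injective, hence bijective,
self-map of the finite set `Σ̂₁`. A map permuting the support of a density and preserving it
there preserves the measure, and the `N`-particle sum factorises over the particles.
-/

section Dynamics

variable {R : ℕ}

lemma fpred_fsucc (k : Fin R) : fpred (fsucc k) = k := by
  have := k.isLt
  ext
  simp only [fpred, fsucc]
  rcases Nat.lt_or_ge (k.1 + 1) R with h | h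
  · rw [Nat.mod_eq_of_lt h, show k.1 + 1 + (R - 1) = k.1 + R by omega, Nat.add_mod_right,
      Nat.mod_eq_of_lt k.isLt]
  · rw [show k.1 + 1 = R by omega, Nat.mod_self, Nat.zero_add,
      Nat.mod_eq_of_lt (show R - 1 < R by omega)]
    omega

lemma fsucc_fpred (k : Fin R) : fsucc (fpred k) = k := by
  have := k.isLt
  ext
  simp only [fpred, fsucc]
  rcases Nat.eq_zero_or_pos k.1 with h | h
  · rw [h, Nat.zero_add, Nat.mod_eq_of_lt (show R - 1 < R by omega),
      show R - 1 + 1 = R by omega, Nat.mod_self]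
  · rw [show k.1 + (R - 1) = R + (k.1 - 1) by omega, Nat.add_mod_left,
      Nat.mod_eq_of_lt (show k.1 - 1 < R by omega), show k.1 - 1 + 1 = k.1 by omega,
      Nat.mod_eq_of_lt k.isLt]

def Vel.neg : Vel → Vel
  | .pe => .me
  | .me => .pe
  | .pm => .mm
  | .mm => .pm

def timeReversal (x : State R) : State R := (x.1, x.2.neg)

lemma timeReversal_injective : Function.Injective (timeReversal (R := R)) := by
  rintro ⟨q, p⟩ ⟨q', p'⟩ h
  simp only [timeReversal, Prod.mk.injEq] at h
  obtain ⟨rfl, h⟩ := h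
  cases p <;> cases p' <;> simp_all [Vel.neg]

/-- Off `R₃` the only obstruction is a particle leaving `R₁` through wall `0`: in `Fin 3` it
lands on `R₃` and would retrace through wall `3`. -/
lemma step_timeReversal_step (ξ : Config R) (h0 : ∀ k, ξ 0 k = true) {x : State R}
    (hx : ring x ≠ 2) : step ξ (timeReversal (step ξ x)) = timeReversal x := by
  obtain ⟨⟨i, k⟩, p⟩ := x
  cases hm : ξ (wall i p) (site k p) <;> cases p <;> fin_cases i <;>
    simp_all [ring, step, timeReversal, Vel.neg, wall, site, Vel.right, fpred_fsucc, fsucc_fpred]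

lemma ring_step_ne_two (ξ : Config R) (h0 : ∀ k, ξ 0 k = true) (h2 : ∀ k, ξ 2 k = true)
    {x : State R} (hx : ring x ≠ 2) : ring (step ξ x) ≠ 2 := by
  obtain ⟨⟨i, k⟩, p⟩ := x
  cases hm : ξ (wall i p) (site k p) <;> cases p <;> fin_cases i <;>
    simp_all [ring, step, wall, site, Vel.right]

lemma bijOn_step (ξ : Config R) (h0 : ∀ k, ξ 0 k = true) (h2 : ∀ k, ξ 2 k = true) :
    Set.BijOn (step ξ) {x | ring x ≠ 2} {x | ring x ≠ 2} := by
  have hmaps : Set.MapsTo (step ξ) {x | ring x ≠ 2} {x | ring x ≠ 2} :=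
    fun _ hx => ring_step_ne_two ξ h0 h2 hx
  refine ((Set.toFinite _).injOn_iff_bijOn_of_mapsTo hmaps).mp fun x hx y hy hxy => ?_
  apply timeReversal_injective
  rw [← step_timeReversal_step ξ h0 hx, ← step_timeReversal_step ξ h0 hy, hxy]

end Dynamics

section Pushforward

variable {α β ι M : Type*} [Fintype α]

lemma sum_ite_eq_of_bijOn [DecidableEq α] [AddCommMonoid M] {f : α → α} {S : Set α} (hf : Set.BijOn f S S)
    {w : α → M} (hw : ∀ x ∉ S, w x = 0) (hwf : ∀ x ∈ S, w (f x) = w x) (y : α) :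
    (∑ x, if f x = y then w x else 0) = w y := by
  by_cases hy : y ∈ S
  · obtain ⟨x₀, hx₀, rfl⟩ := hf.surjOn hy
    rw [Finset.sum_eq_single x₀ (fun x _ hne => ?_) (by simp), if_pos rfl, hwf x₀ hx₀]
    by_cases hx : x ∈ S
    · exact if_neg fun h => hne (hf.injOn hx hx₀ h)
    · rw [hw x hx, ite_self]
  · rw [hw y hy]
    refine Finset.sum_eq_zero fun x _ => ?_
    by_cases hx : x ∈ S
    · exact if_neg fun h : f x = y => hy (h ▸ hf.mapsTo hx)
    · rw [hw x hx, ite_self]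

lemma sum_ite_piMap_eq_prod [Fintype ι] [DecidableEq ι] [DecidableEq β] [CommSemiring M]
    (f : α → β) (w : α → M) (y : ι → β) :
    (∑ x : ι → α, if (fun j => f (x j)) = y then ∏ j, w (x j) else 0) =
      ∏ j, ∑ a, if f a = y j then w a else 0 := by
  rw [Fintype.prod_sum]
  refine Finset.sum_congr rfl fun x _ => ?_
  rw [Fintype.prod_ite_zero]
  exact if_congr funext_iff rfl rfl

end Pushforward

theorem rho1_invariant_general (R N : ℕ) (ξ : Config R)
    (h0 : ∀ k : Fin R, ξ 0 k = true)
    (h2 : ∀ k : Fin R, ξ 2 k = true) :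
    Set.BijOn (step ξ) {x : State R | ring x ≠ 2} {x : State R | ring x ≠ 2} ∧
    (∀ t : ℕ, 1 ≤ t → ∀ y : Fin N → State R,
      (∑ x : Fin N → State R,
        if (fun j => iter ξ t (x j)) = y then ∏ j, rho1 R (x j) else 0) =
        ∏ j, rho1 R (y j)) := by
  have hbij := bijOn_step ξ h0 h2
  refine ⟨hbij, fun t _ y => ?_⟩
  rw [sum_ite_piMap_eq_prod]
  refine Finset.prod_congr rfl fun j _ => sum_ite_eq_of_bijOn (hbij.iterate t) ?_ ?_ (y j)
  · intro x hx
    simp_all [rho1]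
  · intro x hx
    have hfx : ring ((step ξ)^[t] x) ≠ 2 := (hbij.iterate t).mapsTo hx
    simp only [rho1, if_pos hfx, if_pos (show ring x ≠ 2 from hx)]

/-- for any configuration `ξ` of internal mirrors on the wall
between `R₁` and `R₂`, provided there are mirrors everywhere on the outer walls
and on the wall between `R₂` and `R₃`, the single-particle map `F_ξ` is a
bijection of `Σ̂₁ = (R₁ ∪ R₂) × P` onto itself; consequently the uniform
distribution `ρ₁(q,p) = Πᵢ (1/(8R)) 1_{R₁∪R₂}(qᵢ)` on `Σ₁ = ((R₁∪R₂) × P)^N`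
is invariant under the `N`-particle dynamics `U_ξ(·,t)` for every `t ≥ 1`. -/
theorem rho1_invariant (R N : ℕ) (ξ : Config R)
    (h0 : ∀ k : Fin R, ξ 0 k = true)
    (h2 : ∀ k : Fin R, ξ 2 k = true)
    (h3 : ∀ k : Fin R, ξ 3 k = true) :
    Set.BijOn (step ξ) {x : State R | ring x ≠ 2} {x : State R | ring x ≠ 2} ∧
    (∀ t : ℕ, 1 ≤ t → ∀ y : Fin N → State R,
      (∑ x : Fin N → State R,
        if (fun j => iter ξ t (x j)) = y then ∏ j, rho1 R (x j) else 0) =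
        ∏ j, rho1 R (y j)) :=
  rho1_invariant_general R N ξ h0 h2

end Mirror
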